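/- arXiv:2207.04153 — 3 statements merged into one kernel-verified Lean document; each statement's English description precedes it below -/
import Mathlib

section
/- Let D be a finite nonempty set of triples (z_m, z_p, y) with z_m ∈ ℝ^{d_m}, z_p ∈ ℝ^{d_p}, y ∈ {−1, +1}. Suppose w_p ∈ ℝ^{d_p}, w_p ≠ 0, satisfies y·⟨w_p, z_p⟩ ≥ 1 for all points of D, and suppose there is a unit vector ε ∈ ℝ^{d_m} such that y·⟨ε, z_m⟩ > 0 for every point with y·⟨w_p, z_p⟩ = 1 (the margin points). Then there exists α ∈ [0, 1) and λ > 0 such that the classifier (w_m′, w_p′) = (λ·√(1 − α²)·‖w_p‖·ε, λ·α·w_p) has ‖(w_m′, w_p′)‖ ≤ ‖(0, w_p)‖ and satisfies y·(⟨w_m′, z_m⟩ + ⟨w_p′, z_p⟩) ≥ 1 for all points of D with strict inequality on the former margin points. In particular, the max-margin classifier over D is not the purely-invariant classifier (0, w_p); its main-task weight block is nonzero. -/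
/-! Rotate the purely invariant classifier `(0, w_p)` by a small angle towards `(ε, 0)`, keeping
its norm: `(k ‖w_p‖ ε, √(1 - k²) w_p)`. A point off the margin has score `y ⟪w_p, z_p⟫ > 1`, which
stays above `1` for small `k` by continuity. A margin point has score
`k ‖w_p‖ y ⟪ε, z_m⟫ + √(1 - k²) ≥ 1 + k (‖w_p‖ y ⟪ε, z_m⟫ - k)`, which exceeds `1` for
`0 < k < ‖w_p‖ y ⟪ε, z_m⟫`. As `D` is finite, one small `k` serves every point. -/

open Filter Topology

theorem one_lt_mul_add_sqrt_one_sub_sq {a k : ℝ} (hk : 0 < k) (hka : k < a) :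
    1 < k * a + √(1 - k ^ 2) := by
  have hsqrt : 1 - k ^ 2 ≤ √(1 - k ^ 2) := Real.le_sqrt_self_iff.2 (by nlinarith)
  nlinarith

theorem eventually_one_lt_mul_add_sqrt_one_sub_sq_mul {a s : ℝ} (hs : 1 ≤ s)
    (ha : s = 1 → 0 < a) : ∀ᶠ k in 𝓝[>] (0 : ℝ), 1 < k * a + √(1 - k ^ 2) * s := by
  rcases hs.eq_or_lt with rfl | hs
  · filter_upwards [Ioo_mem_nhdsGT (ha rfl)] with k ⟨hk, hka⟩
    rw [mul_one]
    exact one_lt_mul_add_sqrt_one_sub_sq hk hka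
  · have hlim : Tendsto (fun k : ℝ => k * a + √(1 - k ^ 2) * s) (𝓝[>] 0) (𝓝 s) := by
      have hcont : Continuous fun k : ℝ => k * a + √(1 - k ^ 2) * s := by fun_prop
      simpa using (hcont.tendsto 0).mono_left nhdsWithin_le_nhds
    exact hlim.eventually (lt_mem_nhds hs)

theorem norm_smul_sq_add_norm_smul_sq {E F : Type*} [SeminormedAddCommGroup E]
    [NormedSpace ℝ E] [SeminormedAddCommGroup F] [NormedSpace ℝ F] {e : E} (he : ‖e‖ = 1) (w : F)
    {k α : ℝ} (hkα : k ^ 2 + α ^ 2 = 1) :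
    ‖(k * ‖w‖) • e‖ ^ 2 + ‖α • w‖ ^ 2 = ‖w‖ ^ 2 := by
  simp only [norm_smul, he, Real.norm_eq_abs, abs_mul, abs_norm, mul_one, mul_pow, sq_abs]
  linear_combination ‖w‖ ^ 2 * hkα

theorem max_margin_probe_uses_spurious_features_general (dm dp : ℕ)
    (D : Finset (EuclideanSpace ℝ (Fin dm) × EuclideanSpace ℝ (Fin dp) × ℝ))
    (wp : EuclideanSpace ℝ (Fin dp)) (hwp : wp ≠ 0)
    (hsep : ∀ p ∈ D, p.2.2 * (inner ℝ wp p.2.1 : ℝ) ≥ 1)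
    (ε : EuclideanSpace ℝ (Fin dm)) (hε : ‖ε‖ = 1)
    (hmargin : ∀ p ∈ D, p.2.2 * (inner ℝ wp p.2.1 : ℝ) = 1 →
        p.2.2 * (inner ℝ ε p.1 : ℝ) > 0) :
    ∃ α : ℝ, ∃ lam : ℝ, 0 ≤ α ∧ α < 1 ∧ 0 < lam ∧
      (lam * Real.sqrt (1 - α ^ 2) * ‖wp‖) • ε ≠ 0 ∧
      Real.sqrt (‖(lam * Real.sqrt (1 - α ^ 2) * ‖wp‖) • ε‖ ^ 2 + ‖(lam * α) • wp‖ ^ 2)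
        ≤ ‖wp‖ ∧
      (∀ p ∈ D,
        p.2.2 * ((inner ℝ ((lam * Real.sqrt (1 - α ^ 2) * ‖wp‖) • ε) p.1 : ℝ)
          + (inner ℝ ((lam * α) • wp) p.2.1 : ℝ)) ≥ 1) ∧
      (∀ p ∈ D, p.2.2 * (inner ℝ wp p.2.1 : ℝ) = 1 →
        p.2.2 * ((inner ℝ ((lam * Real.sqrt (1 - α ^ 2) * ‖wp‖) • ε) p.1 : ℝ)
          + (inner ℝ ((lam * α) • wp) p.2.1 : ℝ)) > 1) := by
  have hW : 0 < ‖wp‖ := norm_pos_iff.2 hwp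
  have hpoint : ∀ p ∈ D, ∀ᶠ k in 𝓝[>] (0 : ℝ), 1 < k * (‖wp‖ * (p.2.2 * inner ℝ ε p.1))
      + √(1 - k ^ 2) * (p.2.2 * inner ℝ wp p.2.1) := fun p hp =>
    eventually_one_lt_mul_add_sqrt_one_sub_sq_mul (hsep p hp) fun h => mul_pos hW (hmargin p hp h)
  obtain ⟨k, hscore, hk0, hk1⟩ :=
    (((eventually_all_finset D).2 hpoint).and (Ioo_mem_nhdsGT one_pos)).exists
  set α := √(1 - k ^ 2)
  have hkα : k ^ 2 + α ^ 2 = 1 := by rw [Real.sq_sqrt (by nlinarith)]; ring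
  have hk : √(1 - α ^ 2) = k := by rw [← hkα, add_sub_cancel_right, Real.sqrt_sq hk0.le]
  have hrotated : ∀ p ∈ D, 1 < p.2.2 * ((inner ℝ ((1 * √(1 - α ^ 2) * ‖wp‖) • ε) p.1 : ℝ)
      + (inner ℝ ((1 * α) • wp) p.2.1 : ℝ)) := fun p hp => by
    simp only [hk, one_mul, real_inner_smul_left]
    linarith [hscore p hp]
  refine ⟨α, 1, Real.sqrt_nonneg _, ?_, one_pos, ?_, ?_, fun p hp => (hrotated p hp).le,
    fun p hp _ => hrotated p hp⟩
  · exact (Real.sqrt_lt' one_pos).2 (by nlinarith)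
  · rw [hk, one_mul]
    exact smul_ne_zero (by positivity) (norm_ne_zero_iff.1 (by simp [hε]))
  · rw [hk, one_mul, one_mul, norm_smul_sq_add_norm_smul_sq hε wp hkα, Real.sqrt_sq hW.le]

theorem max_margin_probe_uses_spurious_features (dm dp : ℕ)
    (D : Finset (EuclideanSpace ℝ (Fin dm) × EuclideanSpace ℝ (Fin dp) × ℝ))
    (hne : D.Nonempty)
    (hlab : ∀ p ∈ D, p.2.2 = 1 ∨ p.2.2 = -1)
    (wp : EuclideanSpace ℝ (Fin dp)) (hwp : wp ≠ 0)
    (hsep : ∀ p ∈ D, p.2.2 * (inner ℝ wp p.2.1 : ℝ) ≥ 1)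
    (ε : EuclideanSpace ℝ (Fin dm)) (hε : ‖ε‖ = 1)
    (hmargin : ∀ p ∈ D, p.2.2 * (inner ℝ wp p.2.1 : ℝ) = 1 →
        p.2.2 * (inner ℝ ε p.1 : ℝ) > 0) :
    ∃ α : ℝ, ∃ lam : ℝ, 0 ≤ α ∧ α < 1 ∧ 0 < lam ∧
      (lam * Real.sqrt (1 - α ^ 2) * ‖wp‖) • ε ≠ 0 ∧
      Real.sqrt (‖(lam * Real.sqrt (1 - α ^ 2) * ‖wp‖) • ε‖ ^ 2 + ‖(lam * α) • wp‖ ^ 2)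
        ≤ ‖wp‖ ∧
      (∀ p ∈ D,
        p.2.2 * ((inner ℝ ((lam * Real.sqrt (1 - α ^ 2) * ‖wp‖) • ε) p.1 : ℝ)
          + (inner ℝ ((lam * α) • wp) p.2.1 : ℝ)) ≥ 1) ∧
      (∀ p ∈ D, p.2.2 * (inner ℝ wp p.2.1 : ℝ) = 1 →
        p.2.2 * ((inner ℝ ((lam * Real.sqrt (1 - α ^ 2) * ‖wp‖) • ε) p.1 : ℝ)
          + (inner ℝ ((lam * α) • wp) p.2.1 : ℝ)) > 1) :=
  max_margin_probe_uses_spurious_features_general dm dp D wp hwp hsep ε hε hmargin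
end

section
/- Let D be a finite set of pairs (z, y) with z ∈ ℝⁿ, y ∈ {−1, +1}, and let h*, h : ℝⁿ → ℝ satisfy y·h*(z) ≥ 1 and y·h(z) ≥ 1 for all (z, y) ∈ D. Then for every β ∈ ℝ and every labeling y_p : D → {−1, +1}, the fraction of points with sign(β·h*(z)) = y_p(z) equals the fraction of points with sign(β·h(z)) = y_p(z). -/
noncomputable def sgn (x : ℝ) : ℝ := if 0 ≤ x then 1 else -1

theorem probe_accuracy_indistinguishable (n : ℕ)
    (D : Finset (EuclideanSpace ℝ (Fin n) × ℝ))
    (hstar h : EuclideanSpace ℝ (Fin n) → ℝ)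
    (hlab : ∀ p ∈ D, p.2 = 1 ∨ p.2 = -1)
    (hconstr_star : ∀ p ∈ D, p.2 * hstar p.1 ≥ 1)
    (hconstr : ∀ p ∈ D, p.2 * h p.1 ≥ 1) :
    ∀ (β : ℝ) (yp : EuclideanSpace ℝ (Fin n) × ℝ → ℝ),
      (∀ p ∈ D, yp p = 1 ∨ yp p = -1) →
      (D.filter (fun p => sgn (β * hstar p.1) = yp p)).card
        = (D.filter (fun p => sgn (β * h p.1) = yp p)).card := by
  intro β yp _
  apply Finset.card_bij (fun p _ => p)
  · intro p hp
    simp only [Finset.mem_filter] at hp ⊢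
    refine ⟨hp.1, ?_⟩
    have key : sgn (β * hstar p.1) = sgn (β * h p.1) := by
      rcases hlab p hp.1 with hy | hy
      · have h1 : hstar p.1 ≥ 1 := by have := hconstr_star p hp.1; rw [hy] at this; linarith
        have h2 : h p.1 ≥ 1 := by have := hconstr p hp.1; rw [hy] at this; linarith
        unfold sgn
        by_cases hb : 0 ≤ β
        · rw [if_pos (by positivity), if_pos (by positivity)]
        · push_neg at hb
          rw [if_neg (by nlinarith), if_neg (by nlinarith)]
      · have h1 : hstar p.1 ≤ -1 := by have := hconstr_star p hp.1; rw [hy] at this; linarith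
        have h2 : h p.1 ≤ -1 := by have := hconstr p hp.1; rw [hy] at this; linarith
        unfold sgn
        by_cases hb : 0 ≤ β
        · by_cases hb0 : β = 0
          · simp [hb0]
          · have hbp : 0 < β := lt_of_le_of_ne hb (Ne.symm hb0)
            rw [if_neg (by nlinarith), if_neg (by nlinarith)]
        · push_neg at hb
          rw [if_pos (by nlinarith), if_pos (by nlinarith)]
    rw [← key]; exact hp.2
  · intro a b _ _ hab; exact hab
  · intro b hb
    simp only [Finset.mem_filter] at hb
    refine ⟨b, ?_, rfl⟩
    simp only [Finset.mem_filter]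
    refine ⟨hb.1, ?_⟩
    -- symmetric direction: same key lemma
    have key : sgn (β * hstar b.1) = sgn (β * h b.1) := by
      rcases hlab b hb.1 with hy | hy
      · have h1 : hstar b.1 ≥ 1 := by have := hconstr_star b hb.1; rw [hy] at this; linarith
        have h2 : h b.1 ≥ 1 := by have := hconstr b hb.1; rw [hy] at this; linarith
        unfold sgn
        by_cases hbp : 0 ≤ β
        · rw [if_pos (by positivity), if_pos (by positivity)]
        · push_neg at hbp
          rw [if_neg (by nlinarith), if_neg (by nlinarith)]
      · have h1 : hstar b.1 ≤ -1 := by have := hconstr_star b hb.1; rw [hy] at this; linarith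
        have h2 : h b.1 ≤ -1 := by have := hconstr b hb.1; rw [hy] at this; linarith
        unfold sgn
        by_cases hbp : 0 ≤ β
        · by_cases hb0 : β = 0
          · simp [hb0]
          · have hbpp : 0 < β := lt_of_le_of_ne hbp (Ne.symm hb0)
            rw [if_neg (by nlinarith), if_neg (by nlinarith)]
        · push_neg at hbp
          rw [if_pos (by nlinarith), if_pos (by nlinarith)]
    rw [key]; exact hb.2
end

section
/- Let (zᵏ)ₖ≥0 be a sequence in ℝⁿ defined by zᵏ⁺¹ = (I − ŵᵏ(ŵᵏ)ᵀ)zᵏ for unit vectors ŵᵏ. If for every k either zᵏ = 0 or ⟨ŵᵏ, zᵏ⟩ ≠ 0 with |⟨ŵᵏ, zᵏ⟩| ≥ c‖zᵏ‖ for a fixed constant c ∈ (0, 1], then ‖zᵏ‖ ≤ (1 − c²)^{k/2} ‖z⁰‖; in particular zᵏ → 0. -/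
/-!
Each step removes the component of `zᵏ` along the unit vector `ŵᵏ`, so by Pythagoras
`‖zᵏ⁺¹‖² = ‖zᵏ‖² - ⟨ŵᵏ, zᵏ⟩² ≤ (1 - c²) ‖zᵏ‖²`: the norm contracts by `√(1 - c²) < 1` at every step.
-/

open Filter Real
open scoped RealInnerProductSpace

section Projection

variable {E : Type*} [NormedAddCommGroup E] [InnerProductSpace ℝ E] {w : E}

theorem norm_sub_inner_smul_sq (hw : ‖w‖ = 1) (x : E) :
    ‖x - ⟪w, x⟫ • w‖ ^ 2 = ‖x‖ ^ 2 - ⟪w, x⟫ ^ 2 := by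
  rw [norm_sub_sq_real, real_inner_smul_right, real_inner_comm, norm_smul, hw,
    Real.norm_eq_abs, mul_one, sq_abs]
  ring

theorem norm_sub_inner_smul_le {c : ℝ} (hw : ‖w‖ = 1) (hc : 0 ≤ c) {x : E}
    (hx : c * ‖x‖ ≤ |⟪w, x⟫|) : ‖x - ⟪w, x⟫ • w‖ ≤ √(1 - c ^ 2) * ‖x‖ := by
  have hsq : (c * ‖x‖) ^ 2 ≤ ⟪w, x⟫ ^ 2 := by
    simpa only [sq_abs] using pow_le_pow_left₀ (by positivity) hx 2
  calc ‖x - ⟪w, x⟫ • w‖ = √(‖x - ⟪w, x⟫ • w‖ ^ 2) := (sqrt_sq (norm_nonneg _)).symm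
    _ ≤ √((1 - c ^ 2) * ‖x‖ ^ 2) := by
      gcongr
      rw [norm_sub_inner_smul_sq hw]
      linarith
    _ = √(1 - c ^ 2) * ‖x‖ := by rw [sqrt_mul' _ (by positivity), sqrt_sq (norm_nonneg _)]

end Projection

theorem iterated_inlp_destroys_representation (n : ℕ) (c : ℝ)
    (hc : c ∈ Set.Ioc (0:ℝ) 1)
    (z : ℕ → EuclideanSpace ℝ (Fin n)) (w : ℕ → EuclideanSpace ℝ (Fin n))
    (hw : ∀ k, ‖w k‖ = 1)
    (hstep : ∀ k, z (k + 1) = z k - (inner ℝ (w k) (z k) : ℝ) • w k)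
    (hgood : ∀ k, z k = 0 ∨ ((inner ℝ (w k) (z k) : ℝ) ≠ 0 ∧
        |(inner ℝ (w k) (z k) : ℝ)| ≥ c * ‖z k‖)) :
    (∀ k, ‖z k‖ ≤ (1 - c ^ 2) ^ ((k : ℝ) / 2) * ‖z 0‖) ∧
    Filter.Tendsto z Filter.atTop (nhds 0) := by
  obtain ⟨hc0, hc1⟩ := hc
  have hq : 0 ≤ 1 - c ^ 2 := by nlinarith
  have hr : √(1 - c ^ 2) < 1 := by
    rw [sqrt_lt' one_pos]
    nlinarith
  have hcontract (k : ℕ) : ‖z (k + 1)‖ ≤ √(1 - c ^ 2) * ‖z k‖ := by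
    rw [hstep k]
    refine norm_sub_inner_smul_le (hw k) hc0.le ?_
    rcases hgood k with hz | ⟨-, hge⟩
    · simp [hz]
    · exact hge
  have hbound (k : ℕ) : ‖z k‖ ≤ √(1 - c ^ 2) ^ k * ‖z 0‖ :=
    le_geom (u := fun k => ‖z k‖) (sqrt_nonneg _) k fun j _ => hcontract j
  refine ⟨fun k => ?_, squeeze_zero_norm hbound ?_⟩
  · rw [rpow_div_two_eq_sqrt _ hq, rpow_natCast]
    exact hbound k
  · simpa using (tendsto_pow_atTop_nhds_zero_of_lt_one (sqrt_nonneg _) hr).mul_const ‖z 0‖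
end
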